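/- arXiv:2204.02913 — 2 statements merged into one kernel-verified Lean document; each statement's English description precedes it below -/
import Mathlib

section
/- Let s ≥ 1 and S = {i₁(s+1)+1, i₂(s+1)+2, …, i_s(s+1)+s} for arbitrary integers i₁, …, i_s. Then the domination ratio of Γ(ℤ, S) equals 1/(s+1). In particular, the set of all multiples of s+1 is an efficient dominating set. -/
/-!
If `D` dominates `Γ(ℤ,S)`, then `D + (S ∪ {0})` is all of `ℤ`, so the window `[-n, n]` contains
at least `(2n + 1 - O(1)) / (s + 1)` points of `D`, and the lower density of `D` is at least
`1 / (s + 1)`. Conversely `S ∪ {0}` is a complete residue system modulo `s + 1`, so each integer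
`m` is dominated by exactly one multiple of `s + 1`, namely `m - t` for the representative
`t ≡ m`; and the multiples of `s + 1` have density `1 / (s + 1)`.
-/

open Filter

/-- Lower density of a set of integers. -/
noncomputable def lowerDensity (D : Set ℤ) : ℝ :=
  Filter.liminf (fun n : ℕ =>
    ((D ∩ Set.Icc (-(n : ℤ)) (n : ℤ)).ncard : ℝ) / (2 * (n : ℝ) + 1)) Filter.atTop

/-- `D` is a dominating set of the integer distance digraph `Γ(ℤ,S)`. -/
def Dominating (S D : Set ℤ) : Prop :=
  ∀ m : ℤ, m ∈ D ∨ ∃ u ∈ D, ∃ s ∈ S, m = u + s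

/-- Domination ratio of `Γ(ℤ,S)`. -/
noncomputable def dominationRatio (S : Set ℤ) : ℝ :=
  sInf (lowerDensity '' {D : Set ℤ | Dominating S D})

/-- `D` is an efficient dominating set of `Γ(ℤ,S)`: every integer is dominated
by exactly one element of `D`. -/
def EffDominating (S D : Set ℤ) : Prop :=
  ∀ m : ℤ, ∃! u, u ∈ D ∧ (u = m ∨ m - u ∈ S)

open Pointwise Topology

noncomputable def windowCard (D : Set ℤ) (n : ℕ) : ℕ :=
  (D ∩ Set.Icc (-(n : ℤ)) n).ncard

lemma lowerDensity_eq_liminf (D : Set ℤ) :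
    lowerDensity D = liminf (fun n : ℕ => (windowCard D n : ℝ) / (2 * n + 1)) atTop :=
  rfl

lemma Int.ncard_Icc (a b : ℤ) : (Set.Icc a b).ncard = (b + 1 - a).toNat := by
  rw [← Finset.coe_Icc, Set.ncard_coe_finset, Int.card_Icc]

lemma windowCard_le (D : Set ℤ) (n : ℕ) : windowCard D n ≤ 2 * n + 1 := by
  calc windowCard D n ≤ (Set.Icc (-(n : ℤ)) n).ncard :=
        Set.ncard_le_ncard Set.inter_subset_right (Set.finite_Icc _ _)
    _ = 2 * n + 1 := by rw [Int.ncard_Icc]; omega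

lemma windowCard_div_le_one (D : Set ℤ) (n : ℕ) : (windowCard D n : ℝ) / (2 * n + 1) ≤ 1 := by
  rw [div_le_one (by positivity)]
  exact_mod_cast windowCard_le D n

lemma tendsto_add_div_two_mul_add_one (a C : ℝ) :
    Tendsto (fun n : ℕ => a + C / (2 * n + 1)) atTop (𝓝 a) := by
  have h : Tendsto (fun n : ℕ => 2 * (n : ℝ) + 1) atTop atTop :=
    tendsto_atTop_add_const_right _ _
      (tendsto_natCast_atTop_atTop.const_mul_atTop two_pos)
  simpa using tendsto_const_nhds.add (tendsto_const_nhds.div_atTop h)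

lemma le_lowerDensity {D : Set ℤ} {a C : ℝ}
    (h : ∀ n : ℕ, a * (2 * n + 1) - C ≤ windowCard D n) : a ≤ lowerDensity D := by
  have hlim := tendsto_add_div_two_mul_add_one a (-C)
  rw [lowerDensity_eq_liminf, ← hlim.liminf_eq]
  refine liminf_le_liminf (Eventually.of_forall fun n => ?_) hlim.isBoundedUnder_ge
    (isBoundedUnder_of ⟨1, windowCard_div_le_one D⟩).isCoboundedUnder_ge
  rw [le_div_iff₀ (by positivity)]
  have := h n
  field_simp
  linarith

lemma lowerDensity_le {D : Set ℤ} {a C : ℝ}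
    (h : ∀ n : ℕ, (windowCard D n : ℝ) ≤ a * (2 * n + 1) + C) : lowerDensity D ≤ a := by
  have hlim := tendsto_add_div_two_mul_add_one a C
  rw [lowerDensity_eq_liminf, ← hlim.liminf_eq]
  refine liminf_le_liminf (Eventually.of_forall fun n => ?_)
    (isBoundedUnder_of ⟨0, fun n => by positivity⟩) hlim.isBoundedUnder_le.isCoboundedUnder_ge
  rw [div_le_iff₀ (by positivity)]
  have := h n
  field_simp
  linarith

lemma one_div_card_le_lowerDensity {D : Set ℤ} {T : Finset ℤ}
    (hT : ∀ m : ℤ, ∃ u ∈ D, ∃ t ∈ T, m = u + t) : 1 / (T.card : ℝ) ≤ lowerDensity D := by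
  classical
  set M : ℕ := T.sup Int.natAbs
  refine le_lowerDensity (C := 2 * M / T.card) fun n => ?_
  have hfin : (D ∩ Set.Icc (-(n : ℤ)) n).Finite := (Set.finite_Icc _ _).inter_of_right _
  have hcover : Finset.Icc (-((n : ℤ) - M)) (n - M) ⊆ hfin.toFinset + T := by
    intro m hm
    rw [Finset.mem_Icc] at hm
    obtain ⟨u, hu, t, ht, rfl⟩ := hT m
    have htM : t.natAbs ≤ M := Finset.le_sup ht
    have hu' : u ∈ hfin.toFinset := by
      rw [Set.Finite.mem_toFinset]
      exact ⟨hu, by omega, by omega⟩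
    exact Finset.mem_add.2 ⟨u, hu', t, ht, rfl⟩
  have hcard : 2 * ((n : ℤ) - M) + 1 ≤ windowCard D n * T.card := by
    have h := (Finset.card_le_card hcover).trans Finset.card_add_le
    rw [Int.card_Icc, ← Set.ncard_eq_toFinset_card _ hfin] at h
    have : 2 * ((n : ℤ) - M) + 1 ≤ ((n - M + 1 - -(n - M) : ℤ).toNat : ℤ) := by omega
    unfold windowCard
    exact_mod_cast this.trans (by exact_mod_cast h)
  have hne : T.Nonempty := by
    obtain ⟨-, -, t, ht, -⟩ := hT 0
    exact ⟨t, ht⟩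
  have hpos : (0 : ℝ) < T.card := by exact_mod_cast hne.card_pos
  have hcardR : 2 * ((n : ℝ) - M) + 1 ≤ windowCard D n * T.card := by exact_mod_cast hcard
  rw [div_mul_eq_mul_div, one_mul, ← sub_div, div_le_iff₀ hpos]
  linarith

lemma Dominating.exists_eq_add {S D : Set ℤ} (h : Dominating S D) (m : ℤ) :
    ∃ u ∈ D, ∃ t ∈ insert 0 S, m = u + t := by
  rcases h m with hm | ⟨u, hu, t, ht, rfl⟩
  · exact ⟨m, hm, 0, Set.mem_insert 0 S, (add_zero m).symm⟩
  · exact ⟨u, hu, t, Set.mem_insert_of_mem 0 ht, rfl⟩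

lemma Dominating.one_div_card_add_one_le_lowerDensity {F : Finset ℤ} {D : Set ℤ}
    (h : Dominating F D) : 1 / ((F.card : ℝ) + 1) ≤ lowerDensity D := by
  classical
  have hcover (m : ℤ) : ∃ u ∈ D, ∃ t ∈ insert 0 F, m = u + t := by
    simpa only [← Finset.coe_insert, Finset.mem_coe] using h.exists_eq_add m
  have hcard : ((insert 0 F).card : ℝ) ≤ F.card + 1 := by exact_mod_cast F.card_insert_le 0
  calc 1 / ((F.card : ℝ) + 1) ≤ 1 / ((insert 0 F).card : ℝ) :=
        one_div_le_one_div_of_le (by exact_mod_cast (F.insert_nonempty 0).card_pos) hcard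
    _ ≤ lowerDensity D := one_div_card_le_lowerDensity hcover

lemma windowCard_multiples_le {k : ℤ} (hk : 0 < k) (n : ℕ) :
    (windowCard {m | k ∣ m} n : ℝ) ≤ 1 / k * (2 * n + 1) + 1 := by
  have hsub : {m : ℤ | k ∣ m} ∩ Set.Icc (-(n : ℤ)) n ⊆ (k * ·) '' Set.Icc (-(n / k)) (n / k) := by
    rintro _ ⟨⟨q, rfl⟩, hm⟩
    rw [Set.mem_Icc] at hm
    refine ⟨q, Set.mem_Icc.2 ⟨?_, ?_⟩, rfl⟩
    · rw [neg_le, Int.le_ediv_iff_mul_le hk]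
      linarith [hm.1]
    · rw [Int.le_ediv_iff_mul_le hk]
      linarith [hm.2]
  have hcard : (windowCard {m | k ∣ m} n : ℤ) ≤ 2 * (n / k) + 1 := by
    have h := (Set.ncard_le_ncard hsub ((Set.finite_Icc _ _).image _)).trans
      (Set.ncard_image_le (Set.finite_Icc _ _))
    rw [Int.ncard_Icc] at h
    have : 0 ≤ (n : ℤ) / k := Int.ediv_nonneg (by positivity) hk.le
    unfold windowCard
    omega
  have hkR : (0 : ℝ) < k := by exact_mod_cast hk
  have hquot : (((n : ℤ) / k : ℤ) : ℝ) ≤ n / k := by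
    rw [le_div_iff₀ hkR]
    exact_mod_cast Int.ediv_mul_le _ hk.ne'
  have hcardR : (windowCard {m | k ∣ m} n : ℝ) ≤ 2 * (((n : ℤ) / k : ℤ) : ℝ) + 1 := by
    exact_mod_cast hcard
  have hk' : (0 : ℝ) < 1 / k := by positivity
  calc (windowCard {m | k ∣ m} n : ℝ) ≤ 2 * (n / k) + 1 / k + 1 := by linarith
    _ = 1 / k * (2 * n + 1) + 1 := by ring

lemma lowerDensity_multiples_le {k : ℤ} (hk : 0 < k) : lowerDensity {m | k ∣ m} ≤ 1 / k :=
  lowerDensity_le (windowCard_multiples_le hk)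

lemma EffDominating.dominating {S D : Set ℤ} (h : EffDominating S D) : Dominating S D := by
  intro m
  obtain ⟨u, ⟨hu, rfl | hmu⟩, -⟩ := h m
  · exact Or.inl hu
  · exact Or.inr ⟨u, hu, m - u, hmu, by ring⟩

lemma effDominating_multiples {k : ℤ} {S : Set ℤ}
    (hS : ∀ m : ℤ, ∃! t, t ∈ insert 0 S ∧ t ≡ m [ZMOD k]) : EffDominating S {m | k ∣ m} := by
  intro m
  obtain ⟨t, ⟨ht, htm⟩, huniq⟩ := hS m
  refine ⟨m - t, ⟨Int.modEq_iff_dvd.1 htm, ?_⟩, ?_⟩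
  · rcases ht with rfl | ht
    · exact Or.inl (sub_zero m)
    · exact Or.inr (by rwa [sub_sub_cancel])
  · rintro u ⟨hku, hdom⟩
    have hmu : m - u ∈ insert 0 S := by
      rcases hdom with rfl | hdom
      · exact Or.inl (sub_self u)
      · exact Or.inr hdom
    have := huniq (m - u) ⟨hmu, Int.modEq_iff_dvd.2 (by rwa [sub_sub_cancel])⟩
    omega

lemma existsUnique_mem_image_Ico_modEq {k : ℤ} (f : ℤ → ℤ) (hf : ∀ j, f j ≡ j [ZMOD k])
    (hk : 0 < k) (m : ℤ) : ∃! t, t ∈ f '' Set.Ico 0 k ∧ t ≡ m [ZMOD k] := by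
  refine ⟨f (m % k), ⟨⟨m % k, ⟨Int.emod_nonneg m hk.ne', Int.emod_lt_of_pos m hk⟩, rfl⟩,
    (hf _).trans (Int.mod_modEq m k)⟩, ?_⟩
  rintro _ ⟨⟨j, ⟨hj0, hjk⟩, rfl⟩, hjm⟩
  have : j = m % k := by
    rw [← Int.emod_eq_of_lt hj0 hjk]
    exact (hf j).symm.trans hjm
  rw [this]

noncomputable def shiftedResidues (s : ℤ) (i : ℤ → ℤ) : Finset ℤ :=
  (Finset.Icc 1 s).image fun j => i j * (s + 1) + j

lemma coe_shiftedResidues (s : ℤ) (i : ℤ → ℤ) :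
    (shiftedResidues s i : Set ℤ) = {t : ℤ | ∃ j : ℤ, 1 ≤ j ∧ j ≤ s ∧ t = i j * (s + 1) + j} := by
  ext t
  simp [shiftedResidues, eq_comm, and_assoc]

lemma card_shiftedResidues_le {s : ℤ} (hs : 0 ≤ s) (i : ℤ → ℤ) :
    ((shiftedResidues s i).card : ℝ) ≤ s := by
  have h := (Finset.Icc 1 s).card_image_le (f := fun j => i j * (s + 1) + j)
  rw [Int.card_Icc] at h
  have : ((shiftedResidues s i).card : ℤ) ≤ s := by unfold shiftedResidues; omega
  exact_mod_cast this

lemma insert_zero_shiftedResidues {s : ℤ} (hs : 0 ≤ s) (i : ℤ → ℤ) :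
    insert 0 (shiftedResidues s i : Set ℤ) =
      (fun j => Function.update i 0 0 j * (s + 1) + j) '' Set.Ico 0 (s + 1) := by
  ext t
  simp only [coe_shiftedResidues, Set.mem_insert_iff, Set.mem_ofPred_eq, Set.mem_image,
    Set.mem_Ico]
  constructor
  · rintro (rfl | ⟨j, hj1, hjs, rfl⟩)
    · exact ⟨0, ⟨le_rfl, by omega⟩, by simp⟩
    · exact ⟨j, ⟨by omega, by omega⟩, by rw [Function.update_of_ne (by omega)]⟩
  · rintro ⟨j, ⟨hj0, hjs⟩, rfl⟩
    rcases hj0.eq_or_lt with rfl | hj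
    · exact Or.inl (by simp)
    · exact Or.inr ⟨j, hj, by omega, by rw [Function.update_of_ne (by omega)]⟩

lemma effDominating_shiftedResidues {s : ℤ} (hs : 0 ≤ s) (i : ℤ → ℤ) :
    EffDominating (shiftedResidues s i) {m | (s + 1) ∣ m} := by
  refine effDominating_multiples fun m => ?_
  rw [insert_zero_shiftedResidues hs]
  exact existsUnique_mem_image_Ico_modEq _ (fun j => by simp [Int.ModEq]) (by omega) m

theorem stmt_5 (s : ℤ) (hs : 1 ≤ s) (i : ℤ → ℤ)
    (S : Set ℤ) (hS : S = {t : ℤ | ∃ j : ℤ, 1 ≤ j ∧ j ≤ s ∧ t = i j * (s + 1) + j}) :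
    dominationRatio S = 1 / ((s : ℝ) + 1) ∧
      EffDominating S {m : ℤ | (s + 1) ∣ m} := by
  rw [← coe_shiftedResidues] at hS
  subst hS
  have heff := effDominating_shiftedResidues (by omega : 0 ≤ s) i
  have hlb : 1 / ((s : ℝ) + 1) ∈
      lowerBounds (lowerDensity '' {D | Dominating (shiftedResidues s i) D}) := by
    rintro _ ⟨D, hD, rfl⟩
    have := card_shiftedResidues_le (by omega : 0 ≤ s) i
    calc 1 / ((s : ℝ) + 1) ≤ 1 / ((shiftedResidues s i).card + 1) :=
          one_div_le_one_div_of_le (by positivity) (by linarith)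
      _ ≤ lowerDensity D := hD.one_div_card_add_one_le_lowerDensity
  refine ⟨le_antisymm ?_ (le_csInf ⟨_, _, heff.dominating, rfl⟩ hlb), heff⟩
  calc dominationRatio _ ≤ lowerDensity {m | (s + 1) ∣ m} :=
        csInf_le ⟨_, hlb⟩ ⟨_, heff.dominating, rfl⟩
    _ ≤ 1 / ((s + 1 : ℤ) : ℝ) := lowerDensity_multiples_le (by omega)
    _ = 1 / ((s : ℝ) + 1) := by push_cast; rfl
end

section
/- Let d ≥ 2 and s ∉ [0, d-2] be integers, and write s = dk + e - 1 or s = -dk + d - e - 1 with integers k ≥ 1 and 1 ≤ e ≤ d-1. Then γ̄(ℤ, {1,2,…,d-2,s}) ≤ min{ (k+1)/(dk+e), (2k+e-1)/(2dk-d+2e), 1/(d-1) }. -/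
open Filter

lemma count_le (D : Set ℤ) (n : ℕ) :
    ((D ∩ Set.Icc (-(n : ℤ)) (n : ℤ)).ncard : ℝ) ≤ 2 * (n : ℝ) + 1 := by
  have h1 : D ∩ Set.Icc (-(n : ℤ)) (n : ℤ) ⊆ ↑(Finset.Icc (-(n : ℤ)) (n : ℤ)) := by
    rw [Finset.coe_Icc]; exact Set.inter_subset_right
  have h2 := Set.ncard_le_ncard h1 (Finset.finite_toSet _)
  rw [Set.ncard_coe_finset, Int.card_Icc] at h2
  calc ((D ∩ Set.Icc (-(n : ℤ)) (n : ℤ)).ncard : ℝ) ≤ (((n : ℤ) + 1 - -(n:ℤ)).toNat : ℝ) := by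
        exact_mod_cast h2
    _ ≤ 2 * (n : ℝ) + 1 := by
        have h3 : ((n : ℤ) + 1 - -(n:ℤ)).toNat = 2*n+1 := by omega
        rw [h3]; push_cast; linarith

lemma lowerDensity_nonneg (D : Set ℤ) : 0 ≤ lowerDensity D := by
  apply Filter.le_liminf_of_le
  · exact isCoboundedUnder_ge_of_eventually_le atTop
      (Eventually.of_forall fun n => by
        have := count_le D n
        have h2 : (0:ℝ) < 2 * (n:ℝ) + 1 := by positivity
        rw [div_le_one h2]; exact this)
  · exact Eventually.of_forall fun n => by positivity

lemma periodic_count (p : ℤ) (hp : 0 < p) (F : Finset ℤ) (a b : ℤ) :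
    ({x : ℤ | x % p ∈ F} ∩ Set.Icc a b).ncard ≤ F.card * (b / p + 1 - a / p).toNat := by
  classical
  set T : Finset ℤ := (Finset.Icc (a / p) (b / p) ×ˢ F).image (fun z => z.1 * p + z.2) with hT
  have hsub : {x : ℤ | x % p ∈ F} ∩ Set.Icc a b ⊆ ↑T := by
    rintro x ⟨hx1, hx2⟩
    simp only [hT, Finset.coe_image, Set.mem_image, Finset.mem_coe, Finset.mem_product,
      Finset.mem_Icc]
    refine ⟨(x / p, x % p), ⟨⟨Int.ediv_le_ediv hp hx2.1, Int.ediv_le_ediv hp hx2.2⟩, hx1⟩, ?_⟩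
    show x / p * p + x % p = x
    rw [mul_comm]; exact Int.mul_ediv_add_emod x p
  have h1 := Set.ncard_le_ncard hsub (Finset.finite_toSet T)
  rw [Set.ncard_coe_finset] at h1
  calc ({x : ℤ | x % p ∈ F} ∩ Set.Icc a b).ncard ≤ T.card := h1
    _ ≤ ((Finset.Icc (a / p) (b / p)) ×ˢ F).card := Finset.card_image_le
    _ = (b / p + 1 - a / p).toNat * F.card := by
        rw [Finset.card_product, Int.card_Icc]
    _ = F.card * (b / p + 1 - a / p).toNat := Nat.mul_comm _ _

lemma lowerDensity_periodic_le (p : ℤ) (hp : 0 < p) (F : Finset ℤ) :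
    lowerDensity {x : ℤ | x % p ∈ F} ≤ (F.card : ℝ) / (p : ℝ) := by
  have hpR : (0:ℝ) < (p : ℝ) := by exact_mod_cast hp
  set g : ℕ → ℝ := fun n =>
    (F.card : ℝ) / (p : ℝ) + ((F.card : ℝ) * (2 * (p:ℝ) - 1) / p) * (2 * (n:ℝ) + 1)⁻¹ with hg
  have hgt : Filter.Tendsto g Filter.atTop (nhds ((F.card : ℝ) / (p : ℝ))) := by
    have h1 : Filter.Tendsto (fun n : ℕ => 2 * (n:ℝ) + 1) Filter.atTop Filter.atTop := by
      apply Filter.tendsto_atTop_add_const_right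
      exact (tendsto_natCast_atTop_atTop (R := ℝ)).const_mul_atTop (by norm_num)
    have h2 : Filter.Tendsto (fun n : ℕ => (2 * (n:ℝ) + 1)⁻¹) Filter.atTop (nhds 0) :=
      tendsto_inv_atTop_zero.comp h1
    have := Filter.Tendsto.add
      (tendsto_const_nhds (x := (F.card : ℝ) / (p : ℝ)) (f := Filter.atTop))
      (h2.const_mul ((F.card : ℝ) * (2 * (p:ℝ) - 1) / p))
    simpa using this
  have hfg : ∀ n : ℕ, ((({x : ℤ | x % p ∈ F} ∩ Set.Icc (-(n : ℤ)) (n : ℤ)).ncard : ℝ) /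
      (2 * (n : ℝ) + 1)) ≤ g n := by
    intro n
    have hden : (0:ℝ) < 2 * (n:ℝ) + 1 := by positivity
    have hcount := periodic_count p hp F (-(n:ℤ)) (n:ℤ)
    set b : ℤ := (n:ℤ) / p with hbdef
    set a : ℤ := (-(n:ℤ)) / p with hadef
    have hab : a ≤ b := Int.ediv_le_ediv hp (by omega)
    have hbR : (b : ℝ) * p ≤ (n : ℝ) := by exact_mod_cast Int.ediv_mul_le (n:ℤ) (by omega)
    have haR : -(n:ℝ) < ((a:ℝ) + 1) * p := by
      exact_mod_cast Int.lt_ediv_add_one_mul_self (-(n:ℤ)) hp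
    have hcast : (((b + 1 - a).toNat : ℕ) : ℝ) = (b:ℝ) + 1 - a := by
      exact_mod_cast Int.toNat_of_nonneg (by omega : (0:ℤ) ≤ b + 1 - a)
    have hcR : ((({x : ℤ | x % p ∈ F} ∩ Set.Icc (-(n : ℤ)) (n : ℤ)).ncard : ℝ)) ≤
        (F.card : ℝ) * ((b:ℝ) + 1 - a) := by
      calc ((({x : ℤ | x % p ∈ F} ∩ Set.Icc (-(n : ℤ)) (n : ℤ)).ncard : ℝ))
          ≤ ((F.card * (b + 1 - a).toNat : ℕ) : ℝ) := by exact_mod_cast hcount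
        _ = (F.card : ℝ) * ((b:ℝ) + 1 - a) := by rw [Nat.cast_mul, hcast]
    have hb2 : (b:ℝ) ≤ (n:ℝ) / p := by rw [le_div_iff₀ hpR]; exact hbR
    have ha2 : -((n:ℝ) / p) ≤ (a:ℝ) + 1 := by
      rw [← neg_div, div_le_iff₀ hpR]; linarith
    have hsum : (b:ℝ) + 1 - a ≤ 2 * ((n:ℝ) / p) + 2 := by linarith
    have hFnn : (0:ℝ) ≤ (F.card : ℝ) := by positivity
    have hkey : (F.card : ℝ) * ((b:ℝ) + 1 - a) ≤ g n * (2 * (n:ℝ) + 1) := by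
      calc (F.card : ℝ) * ((b:ℝ) + 1 - a) ≤ (F.card : ℝ) * (2 * ((n:ℝ) / p) + 2) :=
            mul_le_mul_of_nonneg_left hsum hFnn
        _ = g n * (2 * (n:ℝ) + 1) := by rw [hg]; field_simp; ring
    rw [div_le_iff₀ hden]
    exact le_trans hcR hkey
  have hbdd : Filter.IsBoundedUnder (· ≥ ·) Filter.atTop
      (fun n : ℕ => ((({x : ℤ | x % p ∈ F} ∩ Set.Icc (-(n : ℤ)) (n : ℤ)).ncard : ℝ) /
      (2 * (n : ℝ) + 1))) :=
    ⟨0, Filter.eventually_map.mpr (Filter.Eventually.of_forall fun n => by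
      show (0:ℝ) ≤ _
      apply div_nonneg (Nat.cast_nonneg _)
      positivity)⟩
  apply le_of_forall_pos_le_add
  intro ε hε
  apply Filter.liminf_le_of_frequently_le _ hbdd
  have hev : ∀ᶠ n in Filter.atTop, g n < (F.card : ℝ) / (p : ℝ) + ε :=
    hgt.eventually (gt_mem_nhds (by linarith))
  exact (hev.mono (fun n hn => le_of_lt (lt_of_le_of_lt (hfg n) hn))).frequently

lemma mem_periodic (q ρ : ℤ) (F : Finset ℤ) (hρ0 : 0 ≤ ρ) (hρq : ρ < q) (hF : ρ ∈ F) (n : ℤ) :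
    q * n + ρ ∈ {x : ℤ | x % q ∈ F} := by
  have h : (q * n + ρ) % q = ρ := by
    rw [add_comm, Int.add_mul_emod_self_left, Int.emod_eq_of_lt hρ0 hρq]
  simpa [Set.mem_setOf_eq, h] using hF

lemma dominationRatio_le (S D : Set ℤ) (hD : Dominating S D) :
    dominationRatio S ≤ lowerDensity D := by
  apply csInf_le
  · exact ⟨0, by rintro x ⟨E, -, rfl⟩; exact lowerDensity_nonneg E⟩
  · exact ⟨D, hD, rfl⟩

lemma emod_split (m p : ℤ) (hp : 0 < p) : ∃ n r, m = p * n + r ∧ 0 ≤ r ∧ r < p :=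
  ⟨m / p, m % p, (Int.mul_ediv_add_emod m p).symm, Int.emod_nonneg m hp.ne',
    Int.emod_lt_of_pos m hp⟩

lemma ediv_split (a b : ℤ) (hb : 0 < b) (ha : 0 ≤ a) :
    ∃ q t, a = b * q + t ∧ 0 ≤ t ∧ t < b ∧ 0 ≤ q ∧ ∀ c, a < b * c → q < c := by
  refine ⟨a / b, a % b, (Int.mul_ediv_add_emod a b).symm, Int.emod_nonneg a hb.ne',
    Int.emod_lt_of_pos a hb, Int.ediv_nonneg ha hb.le, fun c hc => ?_⟩
  rw [Int.ediv_lt_iff_lt_mul hb]; linarith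

lemma dom3 (d s : ℤ) (hd : 2 ≤ d) :
    Dominating (Set.Icc 1 (d - 2) ∪ {s}) {x : ℤ | x % (d - 1) ∈ ({0} : Finset ℤ)} := by
  intro m
  have hp0 : (0:ℤ) < d - 1 := by omega
  obtain ⟨n, r, hm, hr0, hrp⟩ := emod_split m (d - 1) hp0
  by_cases h : r = 0
  · left
    have hmeq : m = (d - 1) * n + 0 := by rw [hm, h]
    rw [hmeq]
    exact mem_periodic _ _ _ le_rfl hp0 (by simp) n
  · right
    refine ⟨(d - 1) * n + 0, mem_periodic _ _ _ le_rfl hp0 (by simp) n, r, ?_, by rw [hm]; ring⟩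
    left; rw [Set.mem_Icc]; omega

lemma dom1 (d s k e : ℤ) (hd : 2 ≤ d) (hk : 1 ≤ k) (he1 : 1 ≤ e) (he2 : e ≤ d - 1)
    (hse : s = d * k + e - 1 ∨ s = -(d * k) + d - e - 1) :
    Dominating (Set.Icc 1 (d - 2) ∪ {s})
      {x : ℤ | x % (d * k + e) ∈ (Finset.Icc 0 k).image (fun j => j * d)} := by
  intro m
  have hd0 : (0:ℤ) < d := by omega
  have hp0 : (0:ℤ) < d * k + e := by nlinarith
  obtain ⟨n, r, hm, hr0, hrp⟩ := emod_split m (d * k + e) hp0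
  obtain ⟨j, t, hrt, ht0, htd, hj0, hjlt⟩ := ediv_split r d hd0 hr0
  have hjk : j ≤ k := by
    have := hjlt (k + 1) (by nlinarith)
    omega
  have hmemρ : ∀ i : ℤ, 0 ≤ i → i ≤ k →
      i * d ∈ (Finset.Icc 0 k).image (fun j : ℤ => j * d) :=
    fun i h1 h2 => Finset.mem_image.mpr ⟨i, Finset.mem_Icc.mpr ⟨h1, h2⟩, rfl⟩
  have hρlt : ∀ i : ℤ, 0 ≤ i → i ≤ k → i * d < d * k + e := by
    intro i h1 h2
    nlinarith [mul_le_mul_of_nonneg_right h2 hd0.le]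
  by_cases ht : t ≤ d - 2
  · have hmem := mem_periodic (d * k + e) (j * d) _ (by positivity)
      (hρlt j hj0 hjk) (hmemρ j hj0 hjk) n
    by_cases ht0' : t = 0
    · left
      have hmeq : m = (d * k + e) * n + j * d := by rw [hm, hrt, ht0']; ring
      rw [hmeq]; exact hmem
    · right
      exact ⟨(d * k + e) * n + j * d, hmem, t, Or.inl (Set.mem_Icc.mpr ⟨by omega, ht⟩),
        by rw [hm, hrt]; ring⟩
  · have ht1 : t = d - 1 := by omega
    have hjk1 : j ≤ k - 1 := by
      have h1 : d * j < d * k := by linarith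
      have := (mul_lt_mul_iff_right₀ hd0).mp h1
      omega
    right
    rcases hse with hs | hs
    · refine ⟨(d * k + e) * (n - 1) + (j + 1) * d,
        mem_periodic _ _ _ (by positivity) (hρlt (j + 1) (by omega) (by omega))
          (hmemρ (j + 1) (by omega) (by omega)) (n - 1),
        s, Or.inr rfl, by rw [hm, hrt, ht1, hs]; ring⟩
    · refine ⟨(d * k + e) * (n + 1) + j * d,
        mem_periodic _ _ _ (by positivity) (hρlt j hj0 hjk) (hmemρ j hj0 hjk) (n + 1),
        s, Or.inr rfl, by rw [hm, hrt, ht1, hs]; ring⟩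

lemma dom2 (d s k e : ℤ) (hd : 2 ≤ d) (hk : 1 ≤ k) (he1 : 1 ≤ e) (he2 : e ≤ d - 1)
    (hse : s = d * k + e - 1 ∨ s = -(d * k) + d - e - 1) :
    Dominating (Set.Icc 1 (d - 2) ∪ {s})
      {x : ℤ | x % (2 * d * k - d + 2 * e) ∈
        ((Finset.Icc 0 (k - 1)).image (fun j => j * d) ∪
         (Finset.Icc 0 (k - 1)).image (fun j => k * d + e + j * d) ∪
         (Finset.Icc 1 (e - 1)).image (fun i => (2 * k - 1) * d + e + i))} := by
  intro m
  have hd0 : (0:ℤ) < d := by omega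
  have hq0 : (0:ℤ) < 2 * d * k - d + 2 * e := by nlinarith
  set q : ℤ := 2 * d * k - d + 2 * e with hqdef
  set F : Finset ℤ :=
    ((Finset.Icc 0 (k - 1)).image (fun j => j * d) ∪
     (Finset.Icc 0 (k - 1)).image (fun j => k * d + e + j * d) ∪
     (Finset.Icc 1 (e - 1)).image (fun i => (2 * k - 1) * d + e + i)) with hFdef
  have mem1 : ∀ i : ℤ, 0 ≤ i → i ≤ k - 1 → i * d ∈ F := fun i h1 h2 =>
    Finset.mem_union_left _ (Finset.mem_union_left _
      (Finset.mem_image.mpr ⟨i, Finset.mem_Icc.mpr ⟨h1, h2⟩, rfl⟩))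
  have mem2 : ∀ i : ℤ, 0 ≤ i → i ≤ k - 1 → k * d + e + i * d ∈ F := fun i h1 h2 =>
    Finset.mem_union_left _ (Finset.mem_union_right _
      (Finset.mem_image.mpr ⟨i, Finset.mem_Icc.mpr ⟨h1, h2⟩, rfl⟩))
  have mem3 : ∀ i : ℤ, 1 ≤ i → i ≤ e - 1 → (2 * k - 1) * d + e + i ∈ F := fun i h1 h2 =>
    Finset.mem_union_right _
      (Finset.mem_image.mpr ⟨i, Finset.mem_Icc.mpr ⟨h1, h2⟩, rfl⟩)
  have lt1 : ∀ i : ℤ, 0 ≤ i → i ≤ k - 1 → i * d < q := by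
    intro i h1 h2
    nlinarith [mul_le_mul_of_nonneg_right h2 hd0.le]
  have lt2 : ∀ i : ℤ, 0 ≤ i → i ≤ k - 1 → k * d + e + i * d < q := by
    intro i h1 h2
    nlinarith [mul_le_mul_of_nonneg_right h2 hd0.le]
  have nn2 : ∀ i : ℤ, 0 ≤ i → 0 ≤ k * d + e + i * d := by
    intro i h1
    nlinarith [mul_nonneg h1 hd0.le]
  have lt3 : ∀ i : ℤ, 1 ≤ i → i ≤ e - 1 → (2 * k - 1) * d + e + i < q := by
    intro i h1 h2; nlinarith
  have nn3 : ∀ i : ℤ, 1 ≤ i → 0 ≤ (2 * k - 1) * d + e + i := by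
    intro i h1; nlinarith
  obtain ⟨n, r, hm, hr0, hrp⟩ := emod_split m q hq0
  by_cases hAB : r ≤ k * d + e - 1
  · -- region A : r ∈ [0, kd+e-1]
    obtain ⟨j, t, hrt, ht0, htd, hj0, hjlt⟩ := ediv_split r d hd0 hr0
    have hjk : j ≤ k := by
      have := hjlt (k + 1) (by nlinarith)
      omega
    by_cases htA : t ≤ d - 2
    · by_cases hjA : j ≤ k - 1
      · -- block 1 covers
        have hmem := mem_periodic q (j * d) F (by positivity) (lt1 j hj0 hjA)
          (mem1 j hj0 hjA) n
        by_cases ht0' : t = 0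
        · left
          have hmeq : m = q * n + j * d := by rw [hm, hrt, ht0']; ring
          rw [hmeq]; exact hmem
        · exact Or.inr ⟨q * n + j * d, hmem, t,
            Or.inl (Set.mem_Icc.mpr ⟨by omega, htA⟩), by rw [hm, hrt]; ring⟩
      · -- j = k : gap positions kd .. kd+e-1
        have hj' : j = k := by omega
        rw [hj'] at hrt
        have hte : t ≤ e - 1 := by linarith
        right
        by_cases hte' : t = e - 1
        · -- covered by 0 of a period
          rcases hse with hs | hs
          · exact ⟨q * n + 0 * d, mem_periodic q (0 * d) F (by simp)
              (lt1 0 le_rfl (by omega)) (mem1 0 le_rfl (by omega)) n,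
              s, Or.inr rfl, by rw [hm, hrt, hte', hs]; ring⟩
          · exact ⟨q * (n + 1) + 0 * d, mem_periodic q (0 * d) F (by simp)
              (lt1 0 le_rfl (by omega)) (mem1 0 le_rfl (by omega)) (n + 1),
              s, Or.inr rfl, by rw [hm, hrt, hte', hs]; ring⟩
        · -- covered by third-block element (2k-1)d + e + (t+1)
          have h1 : 1 ≤ t + 1 := by omega
          have h2 : t + 1 ≤ e - 1 := by omega
          rcases hse with hs | hs
          · exact ⟨q * (n - 1) + ((2 * k - 1) * d + e + (t + 1)),
              mem_periodic q _ F (nn3 _ h1) (lt3 _ h1 h2) (mem3 _ h1 h2) (n - 1),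
              s, Or.inr rfl, by rw [hm, hrt, hs]; ring⟩
          · exact ⟨q * n + ((2 * k - 1) * d + e + (t + 1)),
              mem_periodic q _ F (nn3 _ h1) (lt3 _ h1 h2) (mem3 _ h1 h2) n,
              s, Or.inr rfl, by rw [hm, hrt, hs]; ring⟩
    · -- t = d - 1 : gap positions (j+1)d - 1, j ≤ k-1
      have ht1 : t = d - 1 := by omega
      have hjk1 : j ≤ k - 1 := by
        have h1 : d * j < d * k := by linarith
        have := (mul_lt_mul_iff_right₀ hd0).mp h1
        omega
      right
      rcases hse with hs | hs
      · exact ⟨q * (n - 1) + (k * d + e + j * d),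
          mem_periodic q _ F (nn2 j hj0) (lt2 j hj0 hjk1) (mem2 j hj0 hjk1) (n - 1),
          s, Or.inr rfl, by rw [hm, hrt, ht1, hs]; ring⟩
      · exact ⟨q * n + (k * d + e + j * d),
          mem_periodic q _ F (nn2 j hj0) (lt2 j hj0 hjk1) (mem2 j hj0 hjk1) n,
          s, Or.inr rfl, by rw [hm, hrt, ht1, hs]; ring⟩
  · -- region B : r ∈ [kd+e, q-1]
    obtain ⟨j, t, hrt, ht0, htd, hj0, hjlt⟩ := ediv_split (r - (k * d + e)) d hd0 (by omega)
    have hr2 : r = k * d + e + d * j + t := by linarith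
    have hjk1 : j ≤ k - 1 := by
      have := hjlt k (by nlinarith)
      omega
    by_cases htB : t ≤ d - 2
    · have hmem := mem_periodic q (k * d + e + j * d) F (nn2 j hj0) (lt2 j hj0 hjk1)
        (mem2 j hj0 hjk1) n
      by_cases ht0' : t = 0
      · left
        have hmeq : m = q * n + (k * d + e + j * d) := by rw [hm, hr2, ht0']; ring
        rw [hmeq]; exact hmem
      · exact Or.inr ⟨q * n + (k * d + e + j * d), hmem, t,
          Or.inl (Set.mem_Icc.mpr ⟨by omega, htB⟩), by rw [hm, hr2]; ring⟩
    · have ht1 : t = d - 1 := by omega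
      have hjk2 : j ≤ k - 2 := by
        have h1 : d * j < d * (k - 1) := by nlinarith
        have := (mul_lt_mul_iff_right₀ hd0).mp h1
        omega
      right
      rcases hse with hs | hs
      · exact ⟨q * n + (j + 1) * d,
          mem_periodic q _ F (by positivity) (lt1 (j + 1) (by omega) (by omega))
            (mem1 (j + 1) (by omega) (by omega)) n,
          s, Or.inr rfl, by rw [hm, hr2, ht1, hs]; ring⟩
      · exact ⟨q * (n + 1) + (j + 1) * d,
          mem_periodic q _ F (by positivity) (lt1 (j + 1) (by omega) (by omega))
            (mem1 (j + 1) (by omega) (by omega)) (n + 1),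
          s, Or.inr rfl, by rw [hm, hr2, ht1, hs]; ring⟩

theorem stmt_12 (d s k e : ℤ) (hd : 2 ≤ d) (hs : s ∉ Set.Icc 0 (d - 2))
    (hk : 1 ≤ k) (he1 : 1 ≤ e) (he2 : e ≤ d - 1)
    (hse : s = d * k + e - 1 ∨ s = -(d * k) + d - e - 1) :
    dominationRatio (Set.Icc 1 (d - 2) ∪ {s}) ≤
      min (min (((k : ℝ) + 1) / ((d : ℝ) * k + e))
        ((2 * (k : ℝ) + e - 1) / (2 * (d : ℝ) * k - d + 2 * e))) (1 / ((d : ℝ) - 1)) := by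
  have hd0 : (0:ℤ) < d := by omega
  refine le_min (le_min ?_ ?_) ?_
  · -- bound (k+1)/(dk+e)
    have hp0 : (0:ℤ) < d * k + e := by nlinarith
    have hpR : (0:ℝ) < (d:ℝ) * k + e := by exact_mod_cast hp0
    calc dominationRatio (Set.Icc 1 (d - 2) ∪ {s})
        ≤ lowerDensity {x : ℤ | x % (d * k + e) ∈ (Finset.Icc 0 k).image (fun j => j * d)} :=
          dominationRatio_le _ _ (dom1 d s k e hd hk he1 he2 hse)
      _ ≤ (((Finset.Icc 0 k).image (fun j : ℤ => j * d)).card : ℝ) / ((d * k + e : ℤ) : ℝ) :=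
          lowerDensity_periodic_le _ hp0 _
      _ ≤ ((k : ℝ) + 1) / ((d : ℝ) * k + e) := by
          have hcd : ((Finset.Icc (0:ℤ) k).image (fun j : ℤ => j * d)).card ≤
              (k + 1 - 0 : ℤ).toNat := by
            rw [← Int.card_Icc]; exact Finset.card_image_le
          have hcdR : ((((Finset.Icc (0:ℤ) k).image (fun j : ℤ => j * d)).card : ℕ) : ℝ) ≤
              (k : ℝ) + 1 := by
            have h2 : (((k + 1 - 0 : ℤ).toNat : ℕ) : ℝ) = (k : ℝ) + 1 := by
              have h := Int.toNat_of_nonneg (show (0:ℤ) ≤ k + 1 - 0 by omega)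
              have h2 : (((k + 1 - 0 : ℤ).toNat : ℕ) : ℝ) = ((k + 1 - 0 : ℤ) : ℝ) := by
                exact_mod_cast congrArg (fun z : ℤ => (z : ℝ)) h
              rw [h2]; push_cast; ring
            calc ((((Finset.Icc (0:ℤ) k).image (fun j : ℤ => j * d)).card : ℕ) : ℝ)
                ≤ (((k + 1 - 0 : ℤ).toNat : ℕ) : ℝ) := by exact_mod_cast hcd
              _ = (k : ℝ) + 1 := h2
          have hq : ((d * k + e : ℤ) : ℝ) = (d : ℝ) * k + e := by push_cast; ring
          rw [hq]
          gcongr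
  · -- bound (2k+e-1)/(2dk-d+2e)
    have hq0 : (0:ℤ) < 2 * d * k - d + 2 * e := by nlinarith
    have hqR : (0:ℝ) < 2 * (d:ℝ) * k - d + 2 * e := by exact_mod_cast hq0
    set F : Finset ℤ :=
      ((Finset.Icc 0 (k - 1)).image (fun j => j * d) ∪
       (Finset.Icc 0 (k - 1)).image (fun j => k * d + e + j * d) ∪
       (Finset.Icc 1 (e - 1)).image (fun i => (2 * k - 1) * d + e + i)) with hFdef
    calc dominationRatio (Set.Icc 1 (d - 2) ∪ {s})
        ≤ lowerDensity {x : ℤ | x % (2 * d * k - d + 2 * e) ∈ F} :=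
          dominationRatio_le _ _ (dom2 d s k e hd hk he1 he2 hse)
      _ ≤ ((F.card : ℕ) : ℝ) / ((2 * d * k - d + 2 * e : ℤ) : ℝ) :=
          lowerDensity_periodic_le _ hq0 _
      _ ≤ (2 * (k : ℝ) + e - 1) / (2 * (d : ℝ) * k - d + 2 * e) := by
          have hc1 : F.card ≤ (k - 1 + 1 - 0 : ℤ).toNat + (k - 1 + 1 - 0 : ℤ).toNat +
              (e - 1 + 1 - 1 : ℤ).toNat := by
            calc F.card ≤ ((Finset.Icc (0:ℤ) (k-1)).image (fun j : ℤ => j * d) ∪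
                  (Finset.Icc (0:ℤ) (k-1)).image (fun j : ℤ => k * d + e + j * d)).card +
                  ((Finset.Icc (1:ℤ) (e-1)).image (fun i : ℤ => (2 * k - 1) * d + e + i)).card :=
                Finset.card_union_le _ _
              _ ≤ (((Finset.Icc (0:ℤ) (k-1)).image (fun j : ℤ => j * d)).card +
                  ((Finset.Icc (0:ℤ) (k-1)).image (fun j : ℤ => k * d + e + j * d)).card) +
                  ((Finset.Icc (1:ℤ) (e-1)).image (fun i : ℤ => (2 * k - 1) * d + e + i)).card := by
                have := Finset.card_union_le
                  ((Finset.Icc (0:ℤ) (k-1)).image (fun j : ℤ => j * d))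
                  ((Finset.Icc (0:ℤ) (k-1)).image (fun j : ℤ => k * d + e + j * d))
                omega
              _ ≤ (k - 1 + 1 - 0 : ℤ).toNat + (k - 1 + 1 - 0 : ℤ).toNat +
                  (e - 1 + 1 - 1 : ℤ).toNat := by
                have h1 := Finset.card_image_le (s := Finset.Icc (0:ℤ) (k-1))
                  (f := fun j : ℤ => j * d)
                have h2 := Finset.card_image_le (s := Finset.Icc (0:ℤ) (k-1))
                  (f := fun j : ℤ => k * d + e + j * d)
                have h3 := Finset.card_image_le (s := Finset.Icc (1:ℤ) (e-1))
                  (f := fun i : ℤ => (2 * k - 1) * d + e + i)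
                rw [Int.card_Icc] at h1 h2 h3
                omega
          have hcR : ((F.card : ℕ) : ℝ) ≤ 2 * (k : ℝ) + e - 1 := by
            have e1 : (((k - 1 + 1 - 0 : ℤ).toNat : ℕ) : ℝ) = (k : ℝ) := by
              have h := Int.toNat_of_nonneg (show (0:ℤ) ≤ k - 1 + 1 - 0 by omega)
              have h2 : (((k - 1 + 1 - 0 : ℤ).toNat : ℕ) : ℝ) = ((k - 1 + 1 - 0 : ℤ) : ℝ) := by
                exact_mod_cast congrArg (fun z : ℤ => (z : ℝ)) h
              rw [h2]; push_cast; ring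
            have e2 : (((e - 1 + 1 - 1 : ℤ).toNat : ℕ) : ℝ) = (e : ℝ) - 1 := by
              have h := Int.toNat_of_nonneg (show (0:ℤ) ≤ e - 1 + 1 - 1 by omega)
              have h2 : (((e - 1 + 1 - 1 : ℤ).toNat : ℕ) : ℝ) = ((e - 1 + 1 - 1 : ℤ) : ℝ) := by
                exact_mod_cast congrArg (fun z : ℤ => (z : ℝ)) h
              rw [h2]; push_cast; ring
            calc ((F.card : ℕ) : ℝ) ≤ (((k - 1 + 1 - 0 : ℤ).toNat + (k - 1 + 1 - 0 : ℤ).toNat +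
                  (e - 1 + 1 - 1 : ℤ).toNat : ℕ) : ℝ) := by exact_mod_cast hc1
              _ = 2 * (k : ℝ) + e - 1 := by push_cast [e1, e2]; ring
          have hq : ((2 * d * k - d + 2 * e : ℤ) : ℝ) = 2 * (d : ℝ) * k - d + 2 * e := by
            push_cast; ring
          rw [hq]
          gcongr
  · -- bound 1/(d-1)
    have hp0 : (0:ℤ) < d - 1 := by omega
    calc dominationRatio (Set.Icc 1 (d - 2) ∪ {s})
        ≤ lowerDensity {x : ℤ | x % (d - 1) ∈ ({0} : Finset ℤ)} :=
          dominationRatio_le _ _ (dom3 d s hd)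
      _ ≤ ((({0} : Finset ℤ).card : ℕ) : ℝ) / ((d - 1 : ℤ) : ℝ) :=
          lowerDensity_periodic_le _ hp0 _
      _ = 1 / ((d : ℝ) - 1) := by norm_num
end
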